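/- arXiv:1112.2244 — 4 statements merged into one kernel-verified Lean document; each statement's English description precedes it below -/
import Mathlib

section
/- Let C be a braided monoidal category with braiding c. The braiding c is pseudosymmetric (i.e. (c_{Y,Z} ⊗ id_X) ∘ (id_Y ⊗ c_{Z,X}^{-1}) ∘ (c_{X,Y} ⊗ id_Z) = (id_Z ⊗ c_{X,Y}) ∘ (c_{Z,X}^{-1} ⊗ id_Y) ∘ (id_X ⊗ c_{Y,Z}) for all objects X, Y, Z) if and only if the family of double braidings T_{X,Y} := c_{Y,X} ∘ c_{X,Y} satisfies (T_{X,Y} ⊗ id_Z) ∘ (id_X ⊗ T_{Y,Z}) = (id_X ⊗ T_{Y,Z}) ∘ (T_{X,Y} ⊗ id_Z) for all X, Y, Z. -/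
/-!
Postcomposing both sides of the pseudosymmetry equation with the isomorphism
`(β_ Z (Y ⊗ X)).hom ≫ (β_ Y X).hom ▷ Z` turns them into the two sides of the
double-braiding equation: on the left this is the hexagon identity together with
the Yang–Baxter equation, on the right just the hexagon identity, where the
inverse braidings cancel against the new braidings.
-/

open CategoryTheory MonoidalCategory BraidedCategory

section

variable {C : Type*} [Category C] [MonoidalCategory C] [BraidedCategory C]

theorem associator_hom_braiding_whiskerRight_braiding (X Y Z : C) :
    (α_ Z Y X).hom ≫ (β_ Z (Y ⊗ X)).hom ≫ (β_ Y X).hom ▷ Z =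
      (β_ (Z ⊗ Y) X).hom ≫ X ◁ (β_ Z Y).hom ≫ (α_ X Y Z).inv := by
  rw [← braiding_naturality_right, ← braiding_naturality_left_assoc,
    braiding_tensor_left_hom, braiding_tensor_right_hom,
    ← cancel_epi (α_ Z Y X).inv, ← cancel_mono (α_ X Y Z).hom]
  simp only [Category.assoc, Iso.inv_hom_id, Category.comp_id, Iso.inv_hom_id_assoc]
  exact (yang_baxter Z Y X).symm

theorem pseudosymmetry_lhs_comp_braiding (X Y Z : C) :
    ((β_ X Y).hom ▷ Z ≫ (α_ Y X Z).hom ≫ Y ◁ (β_ Z X).inv ≫ (α_ Y Z X).inv ≫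
        (β_ Y Z).hom ▷ X ≫ (α_ Z Y X).hom) ≫ (β_ Z (Y ⊗ X)).hom ≫ (β_ Y X).hom ▷ Z =
      ((β_ X Y).hom ≫ (β_ Y X).hom) ▷ Z ≫ (α_ X Y Z).hom ≫
        X ◁ ((β_ Y Z).hom ≫ (β_ Z Y).hom) ≫ (α_ X Y Z).inv := by
  simp only [Category.assoc]
  rw [associator_hom_braiding_whiskerRight_braiding, braiding_naturality_left_assoc,
    braiding_tensor_left_hom]
  simp only [Category.assoc, Iso.inv_hom_id_assoc, whiskerLeft_comp, comp_whiskerRight]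
  simp only [← whiskerLeft_comp_assoc, Iso.inv_hom_id, whiskerLeft_id, Category.id_comp,
    Iso.hom_inv_id_assoc]

theorem pseudosymmetry_rhs_comp_braiding (X Y Z : C) :
    ((α_ X Y Z).hom ≫ X ◁ (β_ Y Z).hom ≫ (α_ X Z Y).inv ≫ (β_ Z X).inv ▷ Y ≫
        (α_ Z X Y).hom ≫ Z ◁ (β_ X Y).hom) ≫ (β_ Z (Y ⊗ X)).hom ≫ (β_ Y X).hom ▷ Z =
      (α_ X Y Z).hom ≫ X ◁ ((β_ Y Z).hom ≫ (β_ Z Y).hom) ≫ (α_ X Y Z).inv ≫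
        ((β_ X Y).hom ≫ (β_ Y X).hom) ▷ Z := by
  simp only [Category.assoc]
  rw [braiding_naturality_right_assoc, braiding_tensor_right_hom]
  simp only [Category.assoc, Iso.hom_inv_id_assoc, whiskerLeft_comp, comp_whiskerRight]
  simp only [← comp_whiskerRight_assoc, Iso.inv_hom_id, id_whiskerRight, Category.id_comp,
    Iso.inv_hom_id_assoc]

end

/-- A braiding on a monoidal category is pseudosymmetric iff the double
braidings `T_{X,Y} = c_{Y,X} ∘ c_{X,Y}` satisfy
`(T_{X,Y} ⊗ id_Z)(id_X ⊗ T_{Y,Z}) = (id_X ⊗ T_{Y,Z})(T_{X,Y} ⊗ id_Z)`. -/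
theorem pseudosymmetric_iff_double_braidings_commute
    {C : Type*} [Category C] [MonoidalCategory C] [BraidedCategory C] :
    (∀ X Y Z : C,
      (β_ X Y).hom ▷ Z ≫ (α_ Y X Z).hom ≫ Y ◁ (β_ Z X).inv ≫ (α_ Y Z X).inv ≫
        (β_ Y Z).hom ▷ X ≫ (α_ Z Y X).hom =
      (α_ X Y Z).hom ≫ X ◁ (β_ Y Z).hom ≫ (α_ X Z Y).inv ≫ (β_ Z X).inv ▷ Y ≫
        (α_ Z X Y).hom ≫ Z ◁ (β_ X Y).hom) ↔
    (∀ X Y Z : C,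
      ((β_ X Y).hom ≫ (β_ Y X).hom) ▷ Z ≫ (α_ X Y Z).hom ≫
        X ◁ ((β_ Y Z).hom ≫ (β_ Z Y).hom) ≫ (α_ X Y Z).inv =
      (α_ X Y Z).hom ≫ X ◁ ((β_ Y Z).hom ≫ (β_ Z Y).hom) ≫ (α_ X Y Z).inv ≫
        ((β_ X Y).hom ≫ (β_ Y X).hom) ▷ Z) :=
  forall₃_congr fun X Y Z => by
    rw [← cancel_mono ((β_ Z (Y ⊗ X)).hom ≫ (β_ Y X).hom ▷ Z),
      pseudosymmetry_lhs_comp_braiding, pseudosymmetry_rhs_comp_braiding]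
end

section
/- Let H be a Hopf algebra and R ∈ H ⊗ H a quasitriangular structure. Then R satisfies R_{12} R_{31}^{-1} R_{23} = R_{23} R_{31}^{-1} R_{12} if and only if the element F = R_{21} R ∈ H ⊗ H satisfies F_{12} F_{23} = F_{23} F_{12} in H ⊗ H ⊗ H. -/
/-!
Relabelling the legs of the quantum Yang–Baxter equation `R₁₂ R₁₃ R₂₃ = R₂₃ R₁₃ R₁₂` (which
follows from `Δ^op = R Δ R⁻¹` and the first hexagon relation) gives
`F₁₂ F₂₃ = R₂₁ R₁₂ R₃₂ R₂₃ = R₃₂ R₃₁ R₂₁ · R₁₂ R₃₁⁻¹ R₂₃` and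
`F₂₃ F₁₂ = R₃₂ R₂₃ R₂₁ R₁₂ = R₃₂ R₃₁ R₂₁ · R₂₃ R₃₁⁻¹ R₁₂`; cancel the unit `R₃₂ R₃₁ R₂₁`.
-/

open TensorProduct

noncomputable section

variable (k H : Type*) [Field k] [Ring H] [HopfAlgebra k H]

/-- `a ⊗ b ↦ a ⊗ b ⊗ 1`. -/
def leg12 : H ⊗[k] H →ₐ[k] H ⊗[k] (H ⊗[k] H) :=
  Algebra.TensorProduct.map (AlgHom.id k H) Algebra.TensorProduct.includeLeft

/-- `a ⊗ b ↦ 1 ⊗ a ⊗ b`. -/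
def leg23 : H ⊗[k] H →ₐ[k] H ⊗[k] (H ⊗[k] H) :=
  Algebra.TensorProduct.includeRight

/-- `a ⊗ b ↦ a ⊗ 1 ⊗ b`. -/
def leg13 : H ⊗[k] H →ₐ[k] H ⊗[k] (H ⊗[k] H) :=
  Algebra.TensorProduct.map (AlgHom.id k H) Algebra.TensorProduct.includeRight

/-- `a ⊗ b ↦ b ⊗ 1 ⊗ a`. -/
def leg31 : H ⊗[k] H →ₐ[k] H ⊗[k] (H ⊗[k] H) :=
  (leg13 k H).comp (Algebra.TensorProduct.comm k H H).toAlgHom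

section YangBaxter

/- In the application `M = H ⊗ H ⊗ H`, `rᵢⱼ` is the `ij`-leg of `R` and `s₃₁ = R₃₁⁻¹`. -/

variable {M : Type*} [Monoid M] {r₁₂ r₂₁ r₃₁ r₂₃ r₃₂ s₃₁ : M}

theorem pseudotriangular_iff_commute_of_yangBaxter (hs : r₃₁ * s₃₁ = 1)
    (hu : IsUnit (r₃₂ * r₃₁ * r₂₁))
    (hyb₁ : r₃₁ * r₃₂ * r₁₂ = r₁₂ * r₃₂ * r₃₁) (hyb₂ : r₃₂ * r₃₁ * r₂₁ = r₂₁ * r₃₁ * r₃₂)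
    (hyb₃ : r₂₃ * r₂₁ * r₃₁ = r₃₁ * r₂₁ * r₂₃) :
    r₁₂ * s₃₁ * r₂₃ = r₂₃ * s₃₁ * r₁₂ ↔
      r₂₁ * r₁₂ * (r₃₂ * r₂₃) = r₃₂ * r₂₃ * (r₂₁ * r₁₂) := by
  have hs' : ∀ x, r₃₁ * (s₃₁ * x) = x := fun x => by rw [← mul_assoc, hs, one_mul]
  have e₁ : r₂₁ * r₁₂ * (r₃₂ * r₂₃) = r₃₂ * r₃₁ * r₂₁ * (r₁₂ * s₃₁ * r₂₃) :=
    calc r₂₁ * r₁₂ * (r₃₂ * r₂₃) = r₂₁ * (r₁₂ * r₃₂ * r₃₁) * (s₃₁ * r₂₃) := by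
          simp only [mul_assoc, hs']
      _ = r₂₁ * r₃₁ * r₃₂ * (r₁₂ * s₃₁ * r₂₃) := by rw [← hyb₁]; simp only [mul_assoc]
      _ = r₃₂ * r₃₁ * r₂₁ * (r₁₂ * s₃₁ * r₂₃) := by rw [hyb₂]
  have e₂ : r₃₂ * r₂₃ * (r₂₁ * r₁₂) = r₃₂ * r₃₁ * r₂₁ * (r₂₃ * s₃₁ * r₁₂) :=
    calc r₃₂ * r₂₃ * (r₂₁ * r₁₂) = r₃₂ * (r₂₃ * r₂₁ * r₃₁) * (s₃₁ * r₁₂) := by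
          simp only [mul_assoc, hs']
      _ = r₃₂ * r₃₁ * r₂₁ * (r₂₃ * s₃₁ * r₁₂) := by rw [hyb₃]; simp only [mul_assoc]
  rw [e₁, e₂, hu.mul_right_inj]

end YangBaxter

section Legs

variable {k H}

local notation "τ" => Algebra.TensorProduct.comm k H H
local notation "σ₁₂" => Algebra.TensorProduct.leftComm k H H H
local notation "σ₂₃" =>
  Algebra.TensorProduct.congr (AlgEquiv.refl : H ≃ₐ[k] H) (Algebra.TensorProduct.comm k H H)

theorem leftComm_leg12 (y : H ⊗[k] H) : σ₁₂ (leg12 k H y) = leg12 k H (τ y) := by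
  induction y using TensorProduct.induction_on <;> simp_all [leg12]

theorem leftComm_leg13 (y : H ⊗[k] H) : σ₁₂ (leg13 k H y) = leg23 k H y := by
  induction y using TensorProduct.induction_on <;> simp_all [leg13, leg23, tmul_add]

theorem leftComm_leg23 (y : H ⊗[k] H) : σ₁₂ (leg23 k H y) = leg13 k H y := by
  induction y using TensorProduct.induction_on <;> simp_all [leg13, leg23, tmul_add]

theorem congr_comm_leg12 (y : H ⊗[k] H) : σ₂₃ (leg12 k H y) = leg13 k H y := by
  induction y using TensorProduct.induction_on <;> simp_all [leg12, leg13]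

theorem congr_comm_leg13 (y : H ⊗[k] H) : σ₂₃ (leg13 k H y) = leg12 k H y := by
  induction y using TensorProduct.induction_on <;> simp_all [leg12, leg13]

theorem congr_comm_leg23 (y : H ⊗[k] H) : σ₂₃ (leg23 k H y) = leg23 k H (τ y) := by
  induction y using TensorProduct.induction_on <;> simp_all [leg23, tmul_add]

theorem leg12_eq_assoc (y : H ⊗[k] H) :
    leg12 k H y = Algebra.TensorProduct.assoc k k k H H H (y ⊗ₜ 1) := by
  induction y using TensorProduct.induction_on <;> simp_all [leg12, add_tmul]

theorem leg31_apply (y : H ⊗[k] H) : leg31 k H y = leg13 k H (τ y) := rfl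

variable {R Rinv : H ⊗[k] H}

theorem leftComm_assoc_map_comul
    (hΔop : ∀ h : H, τ (Bialgebra.comulAlgHom k H h) = R * Bialgebra.comulAlgHom k H h * Rinv)
    (x : H ⊗[k] H) :
    σ₁₂ (Algebra.TensorProduct.assoc k k k H H H
        (Algebra.TensorProduct.map (Bialgebra.comulAlgHom k H) (AlgHom.id k H) x)) =
      leg12 k H R * Algebra.TensorProduct.assoc k k k H H H
        (Algebra.TensorProduct.map (Bialgebra.comulAlgHom k H) (AlgHom.id k H) x) *
        leg12 k H Rinv := by
  induction x using TensorProduct.induction_on with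
  | zero => simp
  | tmul h c =>
    have hflip : σ₁₂ (Algebra.TensorProduct.assoc k k k H H H
        (Bialgebra.comulAlgHom k H h ⊗ₜ c)) =
        Algebra.TensorProduct.assoc k k k H H H (τ (Bialgebra.comulAlgHom k H h) ⊗ₜ c) := by
      induction Bialgebra.comulAlgHom k H h using TensorProduct.induction_on <;>
        simp_all [add_tmul]
    rw [Algebra.TensorProduct.map_tmul, AlgHom.id_apply, hflip, hΔop, leg12_eq_assoc,
      leg12_eq_assoc, ← map_mul, ← map_mul, Algebra.TensorProduct.tmul_mul_tmul,
      Algebra.TensorProduct.tmul_mul_tmul, one_mul, mul_one]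
  | add x y hx hy => simp only [map_add, hx, hy, mul_add, add_mul]

theorem quantum_yang_baxter (hinv₂ : Rinv * R = 1)
    (hΔop : ∀ h : H, τ (Bialgebra.comulAlgHom k H h) = R * Bialgebra.comulAlgHom k H h * Rinv)
    (hhex₁ : (Algebra.TensorProduct.assoc k k k H H H).toAlgHom
        ((Algebra.TensorProduct.map (Bialgebra.comulAlgHom k H) (AlgHom.id k H)) R) =
      leg13 k H R * leg23 k H R) :
    leg12 k H R * leg13 k H R * leg23 k H R = leg23 k H R * leg13 k H R * leg12 k H R := by
  have h := leftComm_assoc_map_comul hΔop R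
  rw [show Algebra.TensorProduct.assoc k k k H H H _ = _ from hhex₁, map_mul, leftComm_leg13,
    leftComm_leg23] at h
  rw [h, mul_assoc _ (leg12 k H Rinv), ← map_mul, hinv₂, map_one, mul_one, mul_assoc]

theorem quantum_yang_baxter_relabel
    (ybe : leg12 k H R * leg13 k H R * leg23 k H R = leg23 k H R * leg13 k H R * leg12 k H R) :
    leg13 k H (τ R) * leg23 k H (τ R) * leg12 k H R =
        leg12 k H R * leg23 k H (τ R) * leg13 k H (τ R) ∧
      leg23 k H (τ R) * leg13 k H (τ R) * leg12 k H (τ R) =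
        leg12 k H (τ R) * leg13 k H (τ R) * leg23 k H (τ R) ∧
      leg23 k H R * leg12 k H (τ R) * leg13 k H (τ R) =
        leg13 k H (τ R) * leg12 k H (τ R) * leg23 k H R := by
  have ybe₁₂ := congrArg σ₁₂ ybe
  have ybe₂₃ := congrArg σ₂₃ ybe
  simp only [map_mul, leftComm_leg12, leftComm_leg13, leftComm_leg23] at ybe₁₂
  simp only [map_mul, congr_comm_leg12, congr_comm_leg13, congr_comm_leg23] at ybe₂₃
  have hyb₁ := congrArg σ₂₃ ybe₁₂
  have hyb₂ := congrArg σ₁₂ hyb₁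
  have hyb₃ := congrArg σ₁₂ ybe₂₃
  simp only [map_mul, congr_comm_leg12, congr_comm_leg13, congr_comm_leg23] at hyb₁ hyb₂
  simp only [map_mul, leftComm_leg12, leftComm_leg13, leftComm_leg23] at hyb₂ hyb₃
  exact ⟨hyb₁, hyb₂, hyb₃⟩

end Legs

theorem pseudotriangular_iff_double_R_commutes
    (R Rinv : H ⊗[k] H)
    (hinv₁ : R * Rinv = 1) (hinv₂ : Rinv * R = 1)
    (hΔop : ∀ h : H,
      (Algebra.TensorProduct.comm k H H) (Bialgebra.comulAlgHom k H h) =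
        R * Bialgebra.comulAlgHom k H h * Rinv)
    (hhex₁ : (Algebra.TensorProduct.assoc k k k H H H).toAlgHom
        ((Algebra.TensorProduct.map (Bialgebra.comulAlgHom k H) (AlgHom.id k H)) R) =
      leg13 k H R * leg23 k H R) :
    (leg12 k H R * leg31 k H Rinv * leg23 k H R =
      leg23 k H R * leg31 k H Rinv * leg12 k H R) ↔
    (leg12 k H ((Algebra.TensorProduct.comm k H H) R * R) *
        leg23 k H ((Algebra.TensorProduct.comm k H H) R * R) =
      leg23 k H ((Algebra.TensorProduct.comm k H H) R * R) *
        leg12 k H ((Algebra.TensorProduct.comm k H H) R * R)) := by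
  obtain ⟨hyb₁, hyb₂, hyb₃⟩ := quantum_yang_baxter_relabel (quantum_yang_baxter hinv₂ hΔop hhex₁)
  have hR : IsUnit R := ⟨⟨R, Rinv, hinv₁, hinv₂⟩, rfl⟩
  have hR₂₁ := hR.map (Algebra.TensorProduct.comm k H H)
  have hs : leg13 k H (Algebra.TensorProduct.comm k H H R) * leg31 k H Rinv = 1 := by
    rw [leg31_apply, ← map_mul, ← map_mul, hinv₁, map_one, map_one]
  simp only [map_mul (leg12 k H), map_mul (leg23 k H)]
  exact pseudotriangular_iff_commute_of_yangBaxter hs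
    (((hR₂₁.map (leg23 k H)).mul (hR₂₁.map (leg13 k H))).mul (hR₂₁.map (leg12 k H))) hyb₁ hyb₂ hyb₃

end
end

section
/- Let (C, ⊗, I, a, l, r, c) be a (not necessarily strict) braided monoidal category. The following are equivalent for all objects U, V, W: (i) the dodecagon a_{W,V,U}(c_{V,W}⊗id_U)a⁻¹_{V,W,U}(id_V⊗c⁻¹_{W,U})a_{V,U,W}(c_{U,V}⊗id_W) = (id_W⊗c_{U,V})a_{W,U,V}(c⁻¹_{W,U}⊗id_V)a⁻¹_{U,W,V}(id_U⊗c_{V,W})a_{U,V,W} commutes; (ii) the double braiding squares commute: a⁻¹_{U,V,W}(id_U⊗c_{W,V}c_{V,W})a_{U,V,W}(c_{V,U}c_{U,V}⊗id_W) = (c_{V,U}c_{U,V}⊗id_W)a⁻¹_{U,V,W}(id_U⊗c_{W,V}c_{V,W})a_{U,V,W}. -/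
open CategoryTheory MonoidalCategory BraidedCategory Category

section Aux

variable {C : Type*} [Category C] [MonoidalCategory C] [BraidedCategory C]

omit [MonoidalCategory C] [BraidedCategory C] in
private lemma ps_comm_inv_iff {X X₁ X₂ : C} (D : X ≅ X)
    (a : X ⟶ X₁) (b : X₁ ⟶ X₂) (c : X₂ ⟶ X) :
    a ≫ b ≫ c ≫ D.inv = D.inv ≫ a ≫ b ≫ c ↔
      D.hom ≫ a ≫ b ≫ c = a ≫ b ≫ c ≫ D.hom := by
  constructor <;> intro h
  · have := congrArg (fun f => D.hom ≫ f ≫ D.hom) h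
    simpa using this
  · have := congrArg (fun f => D.inv ≫ f ≫ D.inv) h
    simpa using this

private lemma ps_lhs_eq (U V W : C) :
    (β_ U V).hom ▷ W ≫ (α_ V U W).hom ≫ V ◁ (β_ W U).inv ≫ (α_ V W U).inv ≫
        (β_ V W).hom ▷ U ≫ (α_ W V U).hom =
    ((α_ U V W).hom ≫ U ◁ (β_ V W).hom ≫ (α_ U W V).inv ≫ (β_ U W).hom ▷ V) ≫
      ((α_ W U V).hom ≫ W ◁ ((β_ U V).hom ≫ (β_ V U).hom) ≫ (α_ W U V).inv) ≫
      ((whiskerRightIso (β_ W U ≪≫ β_ U W) V).inv) ≫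
      ((α_ W U V).hom ≫ W ◁ (β_ V U).inv) := by
  calc (β_ U V).hom ▷ W ≫ (α_ V U W).hom ≫ V ◁ (β_ W U).inv ≫ (α_ V W U).inv ≫
        (β_ V W).hom ▷ U ≫ (α_ W V U).hom
      = (β_ U V).hom ▷ W ≫ (α_ V U W).hom ≫ V ◁ (β_ U W).hom ≫
          V ◁ ((β_ U W).inv ≫ (β_ W U).inv) ≫ (α_ V W U).inv ≫
          (β_ V W).hom ▷ U ≫ (α_ W V U).hom := by
        simp
    _ = (β_ U V).hom ▷ W ≫ (α_ V U W).hom ≫ V ◁ (β_ U W).hom ≫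
          V ◁ ((β_ U W).inv ≫ (β_ W U).inv) ≫ (β_ V (W ⊗ U)).hom ≫
          (α_ W U V).hom ≫ W ◁ (β_ V U).inv := by
        rw [braiding_tensor_right_hom V W U]; simp
    _ = (β_ U V).hom ▷ W ≫ (α_ V U W).hom ≫ V ◁ (β_ U W).hom ≫
          (β_ V (W ⊗ U)).hom ≫ ((β_ U W).inv ≫ (β_ W U).inv) ▷ V ≫
          (α_ W U V).hom ≫ W ◁ (β_ V U).inv := by
        rw [braiding_naturality_right_assoc]
    _ = (β_ U V).hom ▷ W ≫ (α_ V U W).hom ≫ V ◁ (β_ U W).hom ≫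
          ((α_ V W U).inv ≫ (β_ V W).hom ▷ U ≫ (α_ W V U).hom ≫
            W ◁ (β_ V U).hom ≫ (α_ W U V).inv) ≫
          ((β_ U W).inv ≫ (β_ W U).inv) ▷ V ≫
          (α_ W U V).hom ≫ W ◁ (β_ V U).inv := by
        rw [← braiding_tensor_right_hom V W U]
    _ = ((α_ U V W).hom ≫ ((α_ U V W).inv ≫ (β_ U V).hom ▷ W ≫ (α_ V U W).hom ≫
          V ◁ (β_ U W).hom ≫ (α_ V W U).inv ≫ (β_ V W).hom ▷ U ≫ (α_ W V U).hom)) ≫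
          W ◁ (β_ V U).hom ≫ (α_ W U V).inv ≫
          ((β_ U W).inv ≫ (β_ W U).inv) ▷ V ≫
          (α_ W U V).hom ≫ W ◁ (β_ V U).inv := by
        simp
    _ = ((α_ U V W).hom ≫ (U ◁ (β_ V W).hom ≫ (α_ U W V).inv ≫ (β_ U W).hom ▷ V ≫
          (α_ W U V).hom ≫ W ◁ (β_ U V).hom)) ≫
          W ◁ (β_ V U).hom ≫ (α_ W U V).inv ≫
          ((β_ U W).inv ≫ (β_ W U).inv) ▷ V ≫
          (α_ W U V).hom ≫ W ◁ (β_ V U).inv := by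
        rw [yang_baxter]
    _ = _ := by simp

private lemma ps_rhs_eq (U V W : C) :
    (α_ U V W).hom ≫ U ◁ (β_ V W).hom ≫ (α_ U W V).inv ≫ (β_ W U).inv ▷ V ≫
        (α_ W U V).hom ≫ W ◁ (β_ U V).hom =
    ((α_ U V W).hom ≫ U ◁ (β_ V W).hom ≫ (α_ U W V).inv ≫ (β_ U W).hom ▷ V) ≫
      ((whiskerRightIso (β_ W U ≪≫ β_ U W) V).inv) ≫
      ((α_ W U V).hom ≫ W ◁ ((β_ U V).hom ≫ (β_ V U).hom) ≫ (α_ W U V).inv) ≫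
      ((α_ W U V).hom ≫ W ◁ (β_ V U).inv) := by
  simp

private lemma ps_key (U V W : C) :
    ((β_ U V).hom ▷ W ≫ (α_ V U W).hom ≫ V ◁ (β_ W U).inv ≫ (α_ V W U).inv ≫
        (β_ V W).hom ▷ U ≫ (α_ W V U).hom =
      (α_ U V W).hom ≫ U ◁ (β_ V W).hom ≫ (α_ U W V).inv ≫ (β_ W U).inv ▷ V ≫
        (α_ W U V).hom ≫ W ◁ (β_ U V).hom) ↔
    (((β_ W U).hom ≫ (β_ U W).hom) ▷ V ≫ (α_ W U V).hom ≫
        W ◁ ((β_ U V).hom ≫ (β_ V U).hom) ≫ (α_ W U V).inv =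
      (α_ W U V).hom ≫ W ◁ ((β_ U V).hom ≫ (β_ V U).hom) ≫ (α_ W U V).inv ≫
        ((β_ W U).hom ≫ (β_ U W).hom) ▷ V) := by
  rw [ps_lhs_eq, ps_rhs_eq, cancel_epi]
  simp only [← Category.assoc]
  rw [cancel_mono, cancel_mono]
  simp only [Category.assoc]
  rw [ps_comm_inv_iff]
  simp only [whiskerRightIso_hom, Iso.trans_hom, Category.assoc]

end Aux

/-- In a (not necessarily strict) braided monoidal category, the pseudosymmetry
dodecagon condition (i) holds for all objects iff the double-braiding square
condition (ii) holds for all objects. -/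
theorem pseudosymmetry_dodecagon_iff_double_braiding_squares
    {C : Type*} [Category C] [MonoidalCategory C] [BraidedCategory C] :
    (∀ U V W : C,
      (β_ U V).hom ▷ W ≫ (α_ V U W).hom ≫ V ◁ (β_ W U).inv ≫ (α_ V W U).inv ≫
        (β_ V W).hom ▷ U ≫ (α_ W V U).hom =
      (α_ U V W).hom ≫ U ◁ (β_ V W).hom ≫ (α_ U W V).inv ≫ (β_ W U).inv ▷ V ≫
        (α_ W U V).hom ≫ W ◁ (β_ U V).hom) ↔
    (∀ U V W : C,
      ((β_ U V).hom ≫ (β_ V U).hom) ▷ W ≫ (α_ U V W).hom ≫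
        U ◁ ((β_ V W).hom ≫ (β_ W V).hom) ≫ (α_ U V W).inv =
      (α_ U V W).hom ≫ U ◁ ((β_ V W).hom ≫ (β_ W V).hom) ≫ (α_ U V W).inv ≫
        ((β_ U V).hom ≫ (β_ V U).hom) ▷ W) := by
  constructor
  · intro h U V W
    exact (ps_key V W U).mp (h V W U)
  · intro h U V W
    exact (ps_key U V W).mpr (h W U V)
end

section
/- In a pseudosymmetric braided monoidal category C, for every object V the braiding component c_{V,V} : V ⊗ V → V ⊗ V is a pseudosymmetric Yang–Baxter operator, i.e. it satisfies both the Yang–Baxter dodecagon for c_{V,V} and the mixed dodecagon with c_{V,V}⁻¹ in the middle positions. -/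
open CategoryTheory MonoidalCategory

/-!
Write `a = c ⊗ id` and `b = id ⊗ c` as automorphisms of `(V ⊗ V) ⊗ V`. The Yang–Baxter equation
is the braid relation `a b a = b a b`, pseudosymmetry of the category says that the squares
`a²` and `b²` commute, and the mixed relation `a b⁻¹ a = b a⁻¹ b` follows from these two in any
group.
-/

theorem mul_inv_mul_eq_of_braid_of_commute_sq {G : Type*} [Group G] {a b : G}
    (hbraid : a * b * a = b * a * b) (hsq : Commute (a ^ 2) (b ^ 2)) :
    a * b⁻¹ * a = b * a⁻¹ * b :=
  calc a * b⁻¹ * a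
      = a⁻¹ * b⁻¹ ^ 2 * (b ^ 2 * a ^ 2) * b⁻¹ * a := by group
    _ = a⁻¹ * b⁻¹ ^ 2 * (a ^ 2 * b ^ 2) * b⁻¹ * a := by rw [hsq.eq]
    _ = a⁻¹ * b⁻¹ ^ 2 * a * (a * b * a) := by simp [pow_two, mul_assoc]
    _ = a⁻¹ * b⁻¹ ^ 2 * a * (b * a * b) := by rw [hbraid]
    _ = a⁻¹ * b⁻¹ ^ 2 * (a * b * a) * b := by group
    _ = a⁻¹ * b⁻¹ ^ 2 * (b * a * b) * b := by rw [hbraid]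
    _ = a⁻¹ * b⁻¹ * (a * b * a) * a⁻¹ * b := by group
    _ = a⁻¹ * b⁻¹ * (b * a * b) * a⁻¹ * b := by rw [hbraid]
    _ = b * a⁻¹ * b := by group

namespace CategoryTheory.Aut

variable {C : Type*} [Category C] {X : C}

lemma mul_hom (f g : Aut X) : (f * g).hom = g.hom ≫ f.hom := rfl

lemma inv_hom (f : Aut X) : f⁻¹.hom = f.inv := rfl

end CategoryTheory.Aut

namespace CategoryTheory.MonoidalCategory

variable {C : Type*} [Category C] [MonoidalCategory C] {V : C}

def SatisfiesYangBaxter (c : V ⊗ V ⟶ V ⊗ V) : Prop :=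
  c ▷ V ≫ (α_ V V V).hom ≫ V ◁ c ≫ (α_ V V V).inv ≫ c ▷ V ≫ (α_ V V V).hom =
    (α_ V V V).hom ≫ V ◁ c ≫ (α_ V V V).inv ≫ c ▷ V ≫ (α_ V V V).hom ≫ V ◁ c

def IsPseudosymmetricYangBaxter (c : V ⊗ V ≅ V ⊗ V) : Prop :=
  SatisfiesYangBaxter c.hom ∧
    c.hom ▷ V ≫ (α_ V V V).hom ≫ V ◁ c.inv ≫ (α_ V V V).inv ≫ c.hom ▷ V ≫ (α_ V V V).hom =
      (α_ V V V).hom ≫ V ◁ c.hom ≫ (α_ V V V).inv ≫ c.inv ▷ V ≫ (α_ V V V).hom ≫ V ◁ c.hom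

def tensorIdAut (c : V ⊗ V ≅ V ⊗ V) : Aut ((V ⊗ V) ⊗ V) := whiskerRightIso c V

def idTensorAut (c : V ⊗ V ≅ V ⊗ V) : Aut ((V ⊗ V) ⊗ V) :=
  α_ V V V ≪≫ whiskerLeftIso V c ≪≫ (α_ V V V).symm

variable (c : V ⊗ V ≅ V ⊗ V)

lemma satisfiesYangBaxter_iff : SatisfiesYangBaxter c.hom ↔
    tensorIdAut c * idTensorAut c * tensorIdAut c =
      idTensorAut c * tensorIdAut c * idTensorAut c := by
  rw [SatisfiesYangBaxter, Aut.ext_iff, ← cancel_mono (α_ V V V).inv]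
  simp only [Aut.mul_hom]
  simp [tensorIdAut, idTensorAut]

lemma isPseudosymmetricYangBaxter_iff : IsPseudosymmetricYangBaxter c ↔
    tensorIdAut c * idTensorAut c * tensorIdAut c =
        idTensorAut c * tensorIdAut c * idTensorAut c ∧
      tensorIdAut c * (idTensorAut c)⁻¹ * tensorIdAut c =
        idTensorAut c * (tensorIdAut c)⁻¹ * idTensorAut c := by
  refine (satisfiesYangBaxter_iff c).and ?_
  rw [Aut.ext_iff, ← cancel_mono (α_ V V V).inv]
  simp only [Aut.mul_hom, Aut.inv_hom]
  simp [tensorIdAut, idTensorAut]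

lemma commute_sq_tensorIdAut_idTensorAut_iff :
    Commute (tensorIdAut c ^ 2) (idTensorAut c ^ 2) ↔
      (c.hom ≫ c.hom) ▷ V ≫ (α_ V V V).hom ≫ V ◁ (c.hom ≫ c.hom) ≫ (α_ V V V).inv =
        (α_ V V V).hom ≫ V ◁ (c.hom ≫ c.hom) ≫ (α_ V V V).inv ≫ (c.hom ≫ c.hom) ▷ V := by
  rw [commute_iff_eq, eq_comm, Aut.ext_iff]
  simp only [pow_two, Aut.mul_hom]
  simp [tensorIdAut, idTensorAut]

theorem isPseudosymmetricYangBaxter_of_commute_sq (hc : SatisfiesYangBaxter c.hom)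
    (hsq : (c.hom ≫ c.hom) ▷ V ≫ (α_ V V V).hom ≫ V ◁ (c.hom ≫ c.hom) ≫ (α_ V V V).inv =
      (α_ V V V).hom ≫ V ◁ (c.hom ≫ c.hom) ≫ (α_ V V V).inv ≫ (c.hom ≫ c.hom) ▷ V) :
    IsPseudosymmetricYangBaxter c := by
  rw [satisfiesYangBaxter_iff] at hc
  rw [← commute_sq_tensorIdAut_idTensorAut_iff] at hsq
  exact (isPseudosymmetricYangBaxter_iff c).2 ⟨hc, mul_inv_mul_eq_of_braid_of_commute_sq hc hsq⟩

lemma braiding_satisfiesYangBaxter [BraidedCategory C] (V : C) :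
    SatisfiesYangBaxter (β_ V V).hom := by
  rw [SatisfiesYangBaxter, ← cancel_epi (α_ V V V).inv]
  simpa using BraidedCategory.yang_baxter V V V

end CategoryTheory.MonoidalCategory

/-- In a pseudosymmetric braided monoidal category (i.e. one whose double
braidings `T_{X,Y} = c_{Y,X}c_{X,Y}` commute in the appropriate sense), for
every object `V` the braiding `c_{V,V}` is a pseudosymmetric Yang–Baxter
operator on `V`: it satisfies both the Yang–Baxter dodecagon and the mixed
dodecagon with `c_{V,V}⁻¹` in the middle positions. -/
theorem braiding_is_pseudosymmetric_YangBaxter_operator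
    {C : Type*} [Category C] [MonoidalCategory C] [BraidedCategory C]
    (hps : ∀ U V W : C,
      ((β_ U V).hom ≫ (β_ V U).hom) ▷ W ≫ (α_ U V W).hom ≫
        U ◁ ((β_ V W).hom ≫ (β_ W V).hom) ≫ (α_ U V W).inv =
      (α_ U V W).hom ≫ U ◁ ((β_ V W).hom ≫ (β_ W V).hom) ≫ (α_ U V W).inv ≫
        ((β_ U V).hom ≫ (β_ V U).hom) ▷ W) :
    ∀ V : C,
      ((β_ V V).hom ▷ V ≫ (α_ V V V).hom ≫ V ◁ (β_ V V).hom ≫ (α_ V V V).inv ≫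
          (β_ V V).hom ▷ V ≫ (α_ V V V).hom =
        (α_ V V V).hom ≫ V ◁ (β_ V V).hom ≫ (α_ V V V).inv ≫ (β_ V V).hom ▷ V ≫
          (α_ V V V).hom ≫ V ◁ (β_ V V).hom) ∧
      ((β_ V V).hom ▷ V ≫ (α_ V V V).hom ≫ V ◁ (β_ V V).inv ≫ (α_ V V V).inv ≫
          (β_ V V).hom ▷ V ≫ (α_ V V V).hom =
        (α_ V V V).hom ≫ V ◁ (β_ V V).hom ≫ (α_ V V V).inv ≫ (β_ V V).inv ▷ V ≫
          (α_ V V V).hom ≫ V ◁ (β_ V V).hom) := fun V =>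
  isPseudosymmetricYangBaxter_of_commute_sq (β_ V V) (braiding_satisfiesYangBaxter V) (hps V V V)
end
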